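/- arXiv:2601.15272 — 2 statements merged into one kernel-verified Lean document; each statement's English description precedes it below -/
import Mathlib

section
/- Recursion for the deformed Lucasnomial power: for all x, y, u, v ∈ ℂ and n ∈ ℕ, if {m}_{s,t} ≠ 0 for all 1 ≤ m ≤ n+1, then (x ⊕_{u,v} y)^{(n+1)} = x·(ux ⊕_{u,v} φy)^{(n)} + y·(φ'x ⊕_{u,v} vy)^{(n)}, and also (x ⊕_{u,v} y)^{(n+1)} = x·(ux ⊕_{u,v} φ'y)^{(n)} + y·(φx ⊕_{u,v} vy)^{(n)}. -/
open scoped BigOperators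

noncomputable section

/-- The Lucas sequence `{n}_{s,t}`. -/
def lucasSeq (s t : ℂ) : ℕ → ℂ
  | 0 => 0
  | 1 => 1
  | n + 2 => s * lucasSeq s t (n + 1) + t * lucasSeq s t n

/-- The Lucastorial `{n}_{s,t}!`. -/
def lucasFact (s t : ℂ) : ℕ → ℂ
  | 0 => 1
  | n + 1 => lucasFact s t n * lucasSeq s t (n + 1)

/-- The Lucasnomial coefficient `{n choose k}_{s,t}`. -/
def lucasBinom (s t : ℂ) (n k : ℕ) : ℂ :=
  lucasFact s t n / (lucasFact s t k * lucasFact s t (n - k))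

/-- The `(u,v)`-deformed Lucasnomial power `(x ⊕_{u,v} y)^{(n)}`. -/
def lucasPow (s t u v x y : ℂ) (n : ℕ) : ℂ :=
  ∑ k ∈ Finset.range (n + 1),
    lucasBinom s t n k * u ^ ((n - k).choose 2) * v ^ (k.choose 2) * x ^ (n - k) * y ^ k

/-- The Lucas-derivative with respect to the roots `p = φ`, `q = φ'`. -/
def lucasDeriv (p q : ℂ) (f : ℂ → ℂ) (x : ℂ) : ℂ :=
  (f (p * x) - f (q * x)) / ((p - q) * x)

/-- The Lucas-derivative, extended by `0` at `0`, as an operator suitable for iteration. -/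
def lucasDeriv0 (p q : ℂ) (f : ℂ → ℂ) : ℂ → ℂ :=
  fun x => if x = 0 then 0 else (f (p * x) - f (q * x)) / ((p - q) * x)

/-- The Lucas-Pantograph exponential `exp_{s,t}(z,u)`. -/
def lucasExp (s t u z : ℂ) : ℂ :=
  ∑' n : ℕ, u ^ (n.choose 2) * z ^ n / lucasFact s t n

/-- The Lucas-Pantograph sine `sin_{s,t}(z,u)`. -/
def lucasSin (s t u z : ℂ) : ℂ :=
  ∑' n : ℕ, (-1 : ℂ) ^ n * u ^ ((2 * n + 1).choose 2) * z ^ (2 * n + 1) / lucasFact s t (2 * n + 1)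

/-- The Lucas-Pantograph cosine `cos_{s,t}(z,u)`. -/
def lucasCos (s t u z : ℂ) : ℂ :=
  ∑' n : ℕ, (-1 : ℂ) ^ n * u ^ ((2 * n).choose 2) * z ^ (2 * n) / lucasFact s t (2 * n)


/-! If `p + q = s` and `p * q = -t`, then `{a+b} = p^a {b} + q^b {a}`. With `a = k+1`, `b = n-k`
this is the Pascal rule `{n+1 choose k+1} = p^(k+1) {n choose k+1} + q^(n-k) {n choose k}`.
Splitting each inner term of `(x ⊕ y)^(n+1)` by it gives the terms of `x (ux ⊕ py)^(n)` and
`y (qx ⊕ vy)^(n)`; the extra factors `u^(n-k)` and `v^k` are absorbed by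
`C(m+1, 2) = C(m, 2) + m`. The two identities are this one for the two orderings of `φ, φ'`. -/

section Roots

variable {s t p q : ℂ}

theorem lucasSeq_succ_of_roots (h1 : p + q = s) (h2 : p * q = -t) (b : ℕ) :
    lucasSeq s t (b + 1) = p * lucasSeq s t b + q ^ b := by
  induction b using Nat.twoStepInduction with
  | zero => simp [lucasSeq]
  | one => simp [lucasSeq, ← h1]
  | more b ih₁ ih₂ =>
    rw [lucasSeq]
    linear_combination lucasSeq s t (b + 2) * h1.symm + q * ih₂ + lucasSeq s t (b + 1) * h2

theorem lucasSeq_add_of_roots (h1 : p + q = s) (h2 : p * q = -t) (a b : ℕ) :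
    lucasSeq s t (a + b) = p ^ a * lucasSeq s t b + q ^ b * lucasSeq s t a := by
  induction a generalizing b with
  | zero => simp [lucasSeq]
  | succ a ih =>
    rw [show a + 1 + b = a + (b + 1) by omega, ih, lucasSeq_succ_of_roots h1 h2,
      lucasSeq_succ_of_roots (p := q) (q := p) (by rw [add_comm, h1]) (by rw [mul_comm, h2])]
    ring

theorem lucasBinom_succ_succ_of_roots (h1 : p + q = s) (h2 : p * q = -t) {n k : ℕ} (hk : k < n)
    (hF : ∀ m ≤ n + 1, lucasFact s t m ≠ 0) :
    lucasBinom s t (n + 1) (k + 1) =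
      p ^ (k + 1) * lucasBinom s t n (k + 1) + q ^ (n - k) * lucasBinom s t n k := by
  obtain ⟨m, rfl⟩ : ∃ m, n = k + m + 1 := ⟨n - k - 1, by omega⟩
  have hseq : lucasSeq s t (k + m + 1 + 1) =
      p ^ (k + 1) * lucasSeq s t (m + 1) + q ^ (m + 1) * lucasSeq s t (k + 1) := by
    rw [← lucasSeq_add_of_roots h1 h2]; ring_nf
  have hk : lucasFact s t (k + 1) ≠ 0 := hF (k + 1) (by omega)
  have hm : lucasFact s t (m + 1) ≠ 0 := hF (m + 1) (by omega)
  simp only [lucasFact, mul_ne_zero_iff] at hk hm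
  simp only [lucasBinom, show k + m + 1 + 1 - (k + 1) = m + 1 by omega,
    show k + m + 1 - (k + 1) = m by omega, show k + m + 1 - k = m + 1 by omega, lucasFact, hseq]
  field_simp [hk.1, hk.2, hm.1, hm.2]

end Roots

theorem lucasFact_ne_zero {s t : ℂ} {N : ℕ}
    (hL : ∀ m, 1 ≤ m → m ≤ N → lucasSeq s t m ≠ 0) :
    ∀ m ≤ N, lucasFact s t m ≠ 0
  | 0, _ => one_ne_zero
  | m + 1, hm => mul_ne_zero (lucasFact_ne_zero hL m (by omega)) (hL (m + 1) (by omega) hm)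

theorem lucasBinom_zero_right {s t : ℂ} {n : ℕ} (h : lucasFact s t n ≠ 0) :
    lucasBinom s t n 0 = 1 := by
  simp [lucasBinom, lucasFact, h]

theorem lucasBinom_self {s t : ℂ} {n : ℕ} (h : lucasFact s t n ≠ 0) :
    lucasBinom s t n n = 1 := by
  simp [lucasBinom, lucasFact, h]

theorem lucasPow_succ_of_roots {s t p q : ℂ} (h1 : p + q = s) (h2 : p * q = -t)
    (x y u v : ℂ) {n : ℕ} (hF : ∀ m ≤ n + 1, lucasFact s t m ≠ 0) :
    lucasPow s t u v x y (n + 1) =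
      x * lucasPow s t u v (u * x) (p * y) n + y * lucasPow s t u v (q * x) (v * y) n := by
  have choose_two_succ (m : ℕ) : (m + 1).choose 2 = m.choose 2 + m := by
    simp [Nat.choose_succ_succ', add_comm]
  have hmid : ∀ k ∈ Finset.range n,
      lucasBinom s t (n + 1) (k + 1) * u ^ ((n + 1 - (k + 1)).choose 2) *
          v ^ ((k + 1).choose 2) * x ^ (n + 1 - (k + 1)) * y ^ (k + 1) =
        x * (lucasBinom s t n (k + 1) * u ^ ((n - (k + 1)).choose 2) * v ^ ((k + 1).choose 2) *
            (u * x) ^ (n - (k + 1)) * (p * y) ^ (k + 1)) +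
          y * (lucasBinom s t n k * u ^ ((n - k).choose 2) * v ^ (k.choose 2) *
            (q * x) ^ (n - k) * (v * y) ^ k) := by
    intro k hk
    obtain ⟨m, rfl⟩ : ∃ m, n = k + m + 1 := ⟨n - k - 1, by rw [Finset.mem_range] at hk; omega⟩
    rw [lucasBinom_succ_succ_of_roots h1 h2 (by omega) hF,
      show k + m + 1 + 1 - (k + 1) = m + 1 by omega, show k + m + 1 - (k + 1) = m by omega,
      show k + m + 1 - k = m + 1 by omega, choose_two_succ m, choose_two_succ k]
    ring
  simp only [lucasPow, Finset.mul_sum]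
  rw [Finset.sum_range_succ' _ (n + 1), Finset.sum_range_succ _ n, Finset.sum_congr rfl hmid,
    Finset.sum_add_distrib, Finset.sum_range_succ' (fun k => x * _),
    Finset.sum_range_succ (fun k => y * _),
    lucasBinom_zero_right (hF (n + 1) le_rfl), lucasBinom_zero_right (hF n (by omega)),
    lucasBinom_self (hF (n + 1) le_rfl), lucasBinom_self (hF n (by omega))]
  simp only [Nat.sub_zero, Nat.sub_self, choose_two_succ]
  ring

theorem lucasPow_succ_general (s t : ℂ)
    (d : ℂ) (hd : d ^ 2 = s ^ 2 + 4 * t) (x y u v : ℂ) (n : ℕ)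
    (hL : ∀ m, 1 ≤ m → m ≤ n + 1 → lucasSeq s t m ≠ 0) :
    lucasPow s t u v x y (n + 1) =
      x * lucasPow s t u v (u * x) (((s + d) / 2) * y) n +
        y * lucasPow s t u v (((s - d) / 2) * x) (v * y) n ∧
    lucasPow s t u v x y (n + 1) =
      x * lucasPow s t u v (u * x) (((s - d) / 2) * y) n +
        y * lucasPow s t u v (((s + d) / 2) * x) (v * y) n := by
  have hprod : (s + d) / 2 * ((s - d) / 2) = -t := by linear_combination (-1 / 4 : ℂ) * hd
  have hF := lucasFact_ne_zero hL
  exact ⟨lucasPow_succ_of_roots (by ring) hprod x y u v hF,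
    lucasPow_succ_of_roots (by ring) (by rw [mul_comm, hprod]) x y u v hF⟩

/-- Recursion for the deformed Lucasnomial power, where `φ = (s+d)/2` and `φ' = (s-d)/2`
with `d` a square root of `s²+4t`. -/
theorem lucasPow_succ (s t : ℂ) (hs : s ≠ 0) (ht : t ≠ 0)
    (d : ℂ) (hd : d ^ 2 = s ^ 2 + 4 * t) (x y u v : ℂ) (n : ℕ)
    (hL : ∀ m, 1 ≤ m → m ≤ n + 1 → lucasSeq s t m ≠ 0) :
    lucasPow s t u v x y (n + 1) =
      x * lucasPow s t u v (u * x) (((s + d) / 2) * y) n +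
        y * lucasPow s t u v (((s - d) / 2) * x) (v * y) n ∧
    lucasPow s t u v x y (n + 1) =
      x * lucasPow s t u v (u * x) (((s - d) / 2) * y) n +
        y * lucasPow s t u v (((s + d) / 2) * x) (v * y) n :=
  lucasPow_succ_general s t d hd x y u v n hL
end
end

section
/- Iterated Lucas-derivative of the Lucas-Pantograph exponential: let a, u ∈ ℂ with u ≠ 0 and assume the series Σ_{n=0}^{∞} u^{C(n,2)}·wⁿ/{n}_{s,t}! converges absolutely for every w ∈ ℂ. Let E(z) = exp_{s,t}(az, u). Then for every k ∈ ℕ and every z ≠ 0, (D_{s,t}^{k} E)(z) = aᵏ·u^{C(k,2)}·exp_{s,t}(a·uᵏ·z, u), where D_{s,t}^{k} denotes the k-th iterate of the Lucas-derivative operator. -/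
open scoped BigOperators

noncomputable section

/-!
If `p + q = s` and `p q = -t`, then `p ^ n - q ^ n = (p - q) {n}_{s,t}`, so the Lucas-derivative
sends `x ^ (n + 1)` to `{n+1}_{s,t} x ^ n` and acts on a power series by shifting coefficients.
On `exp_{s,t}(c w, u)` the factor `{n+1}_{s,t}` cancels against the Lucastorial and
`C(n+1,2) = n + C(n,2)` turns the extra `u ^ n` into the dilation `z ↦ u z`, giving
`D exp_{s,t}(c ·, u) = c exp_{s,t}(c u ·, u)`; iterating gives the theorem. Since `φ, φ' ≠ 0`,
the value of a function at `0` never enters its Lucas-derivative at `z ≠ 0`.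
-/

lemma Nat.choose_two_succ (n : ℕ) : (n + 1).choose 2 = n + n.choose 2 := by
  rw [Nat.choose_succ_succ', Nat.choose_one_right]

lemma lucasSeq_add_two (s t : ℂ) (n : ℕ) :
    lucasSeq s t (n + 2) = s * lucasSeq s t (n + 1) + t * lucasSeq s t n := rfl

lemma lucasFact_succ (s t : ℂ) (n : ℕ) :
    lucasFact s t (n + 1) = lucasFact s t n * lucasSeq s t (n + 1) := rfl

lemma pow_sub_pow_eq_sub_mul_lucasSeq {s t p q : ℂ} (hsum : p + q = s) (hprod : p * q = -t)
    (n : ℕ) : p ^ n - q ^ n = (p - q) * lucasSeq s t n := by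
  induction n using Nat.twoStepInduction with
  | zero => simp [lucasSeq]
  | one => simp [lucasSeq]
  | more n ih₀ ih₁ =>
    calc p ^ (n + 2) - q ^ (n + 2)
        = (p + q) * (p ^ (n + 1) - q ^ (n + 1)) - p * q * (p ^ n - q ^ n) := by ring
      _ = (p - q) * lucasSeq s t (n + 2) := by
        rw [ih₀, ih₁, hsum, hprod, lucasSeq_add_two]; ring

section lucasDeriv0

variable {p q : ℂ}

lemma lucasDeriv0_of_ne_zero (f : ℂ → ℂ) {x : ℂ} (hx : x ≠ 0) :
    lucasDeriv0 p q f x = (f (p * x) - f (q * x)) / ((p - q) * x) :=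
  if_neg hx

lemma lucasDeriv0_const_mul (c : ℂ) (f : ℂ → ℂ) (x : ℂ) :
    lucasDeriv0 p q (fun w => c * f w) x = c * lucasDeriv0 p q f x := by
  by_cases hx : x = 0
  · simp [lucasDeriv0, hx]
  · rw [lucasDeriv0_of_ne_zero _ hx, lucasDeriv0_of_ne_zero _ hx]
    ring

lemma lucasDeriv0_congr (hp : p ≠ 0) (hq : q ≠ 0) {f g : ℂ → ℂ}
    (hfg : ∀ w, w ≠ 0 → f w = g w) : lucasDeriv0 p q f = lucasDeriv0 p q g := by
  funext x
  by_cases hx : x = 0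
  · simp [lucasDeriv0, hx]
  · rw [lucasDeriv0_of_ne_zero _ hx, lucasDeriv0_of_ne_zero _ hx,
      hfg _ (mul_ne_zero hp hx), hfg _ (mul_ne_zero hq hx)]

lemma lucasDeriv0_tsum_pow {s t : ℂ} (hsum : p + q = s) (hprod : p * q = -t) (hpq : p ≠ q)
    (a : ℕ → ℂ) {x : ℂ} (hx : x ≠ 0) (hp : Summable fun n => a n * (p * x) ^ n)
    (hq : Summable fun n => a n * (q * x) ^ n) :
    lucasDeriv0 p q (fun w => ∑' n, a n * w ^ n) x =
      ∑' n, a (n + 1) * lucasSeq s t (n + 1) * x ^ n := by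
  have hpqx : (p - q) * x ≠ 0 := mul_ne_zero (sub_ne_zero.mpr hpq) hx
  rw [lucasDeriv0_of_ne_zero _ hx, ← hp.tsum_sub hq, ← tsum_div_const,
    ((hp.sub hq).div_const _).tsum_eq_zero_add]
  simp only [pow_zero, sub_self, zero_div, zero_add]
  refine tsum_congr fun n => ?_
  rw [div_eq_iff hpqx]
  calc a (n + 1) * (p * x) ^ (n + 1) - a (n + 1) * (q * x) ^ (n + 1)
      = a (n + 1) * x ^ (n + 1) * (p ^ (n + 1) - q ^ (n + 1)) := by ring
    _ = a (n + 1) * lucasSeq s t (n + 1) * x ^ n * ((p - q) * x) := by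
      rw [pow_sub_pow_eq_sub_mul_lucasSeq hsum hprod]; ring

end lucasDeriv0

lemma lucasExp_mul_eq_tsum (s t u c w : ℂ) :
    lucasExp s t u (c * w) = ∑' n, u ^ n.choose 2 * c ^ n / lucasFact s t n * w ^ n := by
  refine tsum_congr fun n => ?_
  ring

lemma lucasDeriv0_lucasExp_mul {s t p q u : ℂ} (hsum : p + q = s) (hprod : p * q = -t)
    (hpq : p ≠ q) (hL : ∀ n : ℕ, 1 ≤ n → lucasSeq s t n ≠ 0)
    (hconv : ∀ w : ℂ, Summable fun n : ℕ => ‖u ^ (n.choose 2) * w ^ n / lucasFact s t n‖)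
    (c : ℂ) {z : ℂ} (hz : z ≠ 0) :
    lucasDeriv0 p q (fun w => lucasExp s t u (c * w)) z = c * lucasExp s t u (c * u * z) := by
  have hsummable (y : ℂ) :
      Summable fun n => u ^ n.choose 2 * c ^ n / lucasFact s t n * (y * z) ^ n :=
    (hconv (c * (y * z))).of_norm.congr fun n => by ring
  simp only [lucasExp_mul_eq_tsum]
  rw [lucasDeriv0_tsum_pow hsum hprod hpq _ hz (hsummable p) (hsummable q), ← tsum_mul_left]
  refine tsum_congr fun n => ?_
  have hLn : lucasSeq s t (n + 1) ≠ 0 := hL (n + 1) n.succ_pos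
  rw [lucasFact_succ, Nat.choose_two_succ, pow_add]
  field_simp
  ring

theorem lucasDeriv_iterate_lucasExp_general (s t : ℂ) (ht : t ≠ 0)
    (hst : s ^ 2 + 4 * t ≠ 0) (hL : ∀ n : ℕ, 1 ≤ n → lucasSeq s t n ≠ 0)
    (d : ℂ) (hd : d ^ 2 = s ^ 2 + 4 * t)
    (a u : ℂ)
    (hconv : ∀ w : ℂ, Summable fun n : ℕ => ‖u ^ (n.choose 2) * w ^ n / lucasFact s t n‖)
    (k : ℕ) (z : ℂ) (hz : z ≠ 0) :
    (lucasDeriv0 ((s + d) / 2) ((s - d) / 2))^[k] (fun w => lucasExp s t u (a * w)) z =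
      a ^ k * u ^ (k.choose 2) * lucasExp s t u (a * u ^ k * z) := by
  set p := (s + d) / 2
  set q := (s - d) / 2
  have hsum : p + q = s := by ring
  have hprod : p * q = -t := by linear_combination (-1 / 4 : ℂ) * hd
  have hpq : p ≠ q := fun h => hst (by rw [← hd]; linear_combination d * h)
  have hpq0 : p * q ≠ 0 := hprod ▸ neg_ne_zero.mpr ht
  induction k generalizing z with
  | zero => simp
  | succ k ih =>
    rw [Function.iterate_succ_apply', lucasDeriv0_congr (left_ne_zero_of_mul hpq0)
      (right_ne_zero_of_mul hpq0) ih, lucasDeriv0_const_mul,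
      lucasDeriv0_lucasExp_mul hsum hprod hpq hL hconv _ hz, Nat.choose_two_succ]
    ring_nf

/-- Iterated Lucas-derivative of the Lucas-Pantograph exponential, where `φ = (s+d)/2`,
`φ' = (s-d)/2` with `d` a square root of `s²+4t ≠ 0`. -/
theorem lucasDeriv_iterate_lucasExp (s t : ℂ) (hs : s ≠ 0) (ht : t ≠ 0)
    (hst : s ^ 2 + 4 * t ≠ 0) (hL : ∀ n : ℕ, 1 ≤ n → lucasSeq s t n ≠ 0)
    (d : ℂ) (hd : d ^ 2 = s ^ 2 + 4 * t)
    (a u : ℂ) (hu : u ≠ 0)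
    (hconv : ∀ w : ℂ, Summable fun n : ℕ => ‖u ^ (n.choose 2) * w ^ n / lucasFact s t n‖)
    (k : ℕ) (z : ℂ) (hz : z ≠ 0) :
    (lucasDeriv0 ((s + d) / 2) ((s - d) / 2))^[k] (fun w => lucasExp s t u (a * w)) z =
      a ^ k * u ^ (k.choose 2) * lucasExp s t u (a * u ^ k * z) :=
  lucasDeriv_iterate_lucasExp_general s t ht hst hL d hd a u hconv k z hz
end
end
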